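/- Let D be a lock diagram and T ∈ KKD(D) with the canonical labeling L_T. If ⟨r,c⟩ is a ghost cell of T and T̃ is obtained from T by a further sequence of K-Kohnert moves, then ⟨r,c⟩ is a ghost cell of T̃ and L_{T̃}(r,c) = L_T(r,c); moreover, if T̂ = G(T,r) is obtained from T by a ghost move dropping the cell (r,c), then L_{T̂}(r,c) = L_T(r,c). -/
import Mathlib


open Finset

/-- A diagram: a finite set of cells in ℕ×ℕ (recorded as (row, column)),
some of which may be marked as ghost cells. -/
structure Diagram where
  cells : Finset (ℕ × ℕ)
  ghosts : Finset (ℕ × ℕ)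
deriving DecidableEq

/-- `(r,c)` is the rightmost cell (ghost or not) in row `r` of `D`. -/
def Rightmost (D : Diagram) (r c : ℕ) : Prop :=
  (r, c) ∈ D.cells ∧ ∀ c' > c, (r, c') ∉ D.cells

/-- A nontrivial K-Kohnert move at row `r` of `D` is possible, taking the
rightmost cell `(r,c)` of row `r` (a non-ghost cell) down to the highest empty
position `(rhat, c)` below it in column `c`, with no ghost cell in between. -/
def KohnertMovable (D : Diagram) (r c rhat : ℕ) : Prop :=
  Rightmost D r c ∧ (r, c) ∉ D.ghosts ∧
  1 ≤ rhat ∧ rhat < r ∧ (rhat, c) ∉ D.cells ∧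
  ∀ r', rhat < r' → r' < r → (r', c) ∈ D.cells ∧ (r', c) ∉ D.ghosts

/-- Result of a Kohnert move: the cell `(r,c)` moves to `(rhat,c)`. -/
def applyKohnert (D : Diagram) (r c rhat : ℕ) : Diagram :=
  ⟨insert (rhat, c) (D.cells.erase (r, c)), D.ghosts⟩

/-- Result of a ghost move: the cell `(r,c)` moves to `(rhat,c)`, leaving a
ghost cell at `(r,c)`. -/
def applyGhost (D : Diagram) (r c rhat : ℕ) : Diagram :=
  ⟨insert (rhat, c) D.cells, insert (r, c) D.ghosts⟩

/-- One (nontrivial) K-Kohnert move. -/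
def KStep (D T : Diagram) : Prop :=
  ∃ r c rhat, KohnertMovable D r c rhat ∧
    (T = applyKohnert D r c rhat ∨ T = applyGhost D r c rhat)

/-- One (nontrivial) ghost move. -/
def GStep (D T : Diagram) : Prop :=
  ∃ r c rhat, KohnertMovable D r c rhat ∧ T = applyGhost D r c rhat

/-- All diagrams obtainable from `D` by sequences of K-Kohnert moves. -/
def KKD (D : Diagram) : Set Diagram := {T | Relation.ReflTransGen KStep D T}

/-- All diagrams obtainable from `D` by sequences of ghost moves. -/
def GKD (D : Diagram) : Set Diagram := {T | Relation.ReflTransGen GStep D T}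

/-- Maximum number of ghost cells over `KKD D`. -/
noncomputable def MaxG (D : Diagram) : ℕ :=
  sSup {n | ∃ T ∈ KKD D, T.ghosts.card = n}

/-- Maximum number of ghost cells over `GKD D`. -/
noncomputable def MaxGhat (D : Diagram) : ℕ :=
  sSup {n | ∃ T ∈ GKD D, T.ghosts.card = n}

/-- Dark clouds of a ghost-free diagram: working from the top row down, mark in
each row the rightmost cell having no marked cell above it in its column. -/
def dark (D : Finset (ℕ × ℕ)) : Finset (ℕ × ℕ) :=
  ((List.range (D.sup Prod.fst + 1)).reverse).foldl
    (fun acc r =>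
      let cand := (D.filter (fun p => p.1 = r ∧ ∀ q ∈ acc, q.2 ≠ p.2)).image Prod.snd
      if h : cand.Nonempty then insert (r, cand.max' h) acc else acc) ∅

/-- Snowflakes of the snow diagram: empty positions lying below a dark cloud
in its column. -/
def snowflakes (D : Finset (ℕ × ℕ)) : Finset (ℕ × ℕ) :=
  ((Finset.range (D.sup Prod.fst + 1)) ×ˢ (D.image Prod.snd)).filter
    (fun p => 1 ≤ p.1 ∧ p ∉ D ∧ ∃ q ∈ dark D, q.2 = p.2 ∧ p.1 < q.1)

/-- Number of snowflakes of the snow diagram of a ghost-free diagram. -/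
def sf (D : Finset (ℕ × ℕ)) : ℕ := (snowflakes D).card

/-- A generalized skew diagram: each nonempty row is a contiguous run of cells,
and both leftmost and rightmost columns weakly increase with the row index. -/
def IsGenSkew (D : Finset (ℕ × ℕ)) : Prop :=
  (∀ p ∈ D, 1 ≤ p.1 ∧ 1 ≤ p.2) ∧
  (∀ r c₁ c c₂, (r, c₁) ∈ D → (r, c₂) ∈ D → c₁ ≤ c → c ≤ c₂ → (r, c) ∈ D) ∧
  (∀ r₁ r₂ c₁, r₁ < r₂ → (r₁, c₁) ∈ D → (∃ c, (r₂, c) ∈ D) →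
      ∃ c₂, c₁ ≤ c₂ ∧ (r₂, c₂) ∈ D) ∧
  (∀ r₁ r₂ c₂, r₁ < r₂ → (r₂, c₂) ∈ D → (∃ c, (r₁, c) ∈ D) →
      ∃ c₁, c₁ ≤ c₂ ∧ (r₁, c₁) ∈ D)

/-- `Key(D)`: the minimal key diagram containing `D`. -/
def keyOf (D : Finset (ℕ × ℕ)) : Finset (ℕ × ℕ) :=
  D.biUnion (fun p => (Finset.Icc 1 p.2).image (fun c => (p.1, c)))

/-- Largest index `i < j` (0-indexed) with `α_i > 0`. -/
def prevIdx (α : List ℕ) (j : ℕ) : Option ℕ :=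
  ((List.range j).filter (fun i => 0 < α.getD i 0)).max?

/-- Contribution of step 2 of the skew-diagram construction at (0-indexed) row `j`. -/
def step2contrib (α : List ℕ) (j : ℕ) : ℕ :=
  if 0 < α.getD j 0 then
    match prevIdx α j with
    | none => 0
    | some i => α.getD i 0 - α.getD j 0
  else 0

/-- Total rightward shift of (0-indexed) row `k` in the skew-diagram construction. -/
def rowShift (α : List ℕ) (k : ℕ) : ℕ :=
  (∑ j ∈ Finset.range (k + 1), step2contrib α j) +
    ((List.range k).filter (fun i => α.getD i 0 = 0)).length

/-- The skew diagram `S(α)` of a weak composition `α`. -/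
def skewDiagram (α : List ℕ) : Finset (ℕ × ℕ) :=
  (Finset.range α.length).biUnion (fun i =>
    (Finset.Icc 1 (α.getD i 0)).image (fun c => (i + 1, c + rowShift α i)))

/-- The lock diagram of a weak composition `α`: `α_i` right-justified cells in row `i`. -/
def lockDiagram (α : List ℕ) : Finset (ℕ × ℕ) :=
  (Finset.range α.length).biUnion (fun i =>
    (Finset.range (α.getD i 0)).image (fun j => (i + 1, α.foldr max 0 - j)))

/-- `L` is a lock-tableau labeling of content `α` on the given set of cells. -/
def IsLockLabeling (α : List ℕ) (cells : Finset (ℕ × ℕ)) (L : ℕ × ℕ → ℕ) : Prop :=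
  (∀ p ∈ cells, 1 ≤ L p ∧ L p ≤ α.length) ∧
  (∀ j, 1 ≤ j → j ≤ α.length → 0 < α.getD (j - 1) 0 →
    ∀ c, α.foldr max 0 - α.getD (j - 1) 0 + 1 ≤ c → c ≤ α.foldr max 0 →
      ∃! p, p ∈ cells ∧ p.2 = c ∧ L p = j) ∧
  (∀ p ∈ cells, p.1 ≤ L p) ∧
  (∀ p ∈ cells, ∀ q ∈ cells, L p = L q → p.2 < q.2 → q.1 ≤ p.1) ∧
  (∀ p ∈ cells, ∀ q ∈ cells, p.2 = q.2 → p.1 < q.1 → L p < L q)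

/-- Label of the position `(r,c)` of `T`: for a ghost cell, the label of the
highest non-ghost cell weakly below it in column `c`. -/
def ghostLabel (T : Diagram) (L : ℕ × ℕ → ℕ) (r c : ℕ) : ℕ :=
  L (((T.cells \ T.ghosts).filter (fun p => p.2 = c ∧ p.1 ≤ r)).sup Prod.fst, c)

/-- The labels, within one column with row set `Rc`, of the modified snow
diagram, where `U` is the set of rows occupied in later columns; rows are
processed from top to bottom. -/
def colLabelList (Rc U : Finset ℕ) : List (ℕ × ℕ) :=
  ((Rc.sort (· ≤ ·)).reverse).foldl
    (fun acc r =>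
      if r ∈ U then (r, r) :: acc
      else
        let cand := U.filter (fun s => s < r ∧ ∀ q ∈ acc, q.2 ≠ s)
        if h : cand.Nonempty then (r, cand.max' h) :: acc else (r, 1) :: acc)
    []

/-- The label of a cell `p ∈ D` in the modified snow diagram `snow-hat(D)`. -/
def hatLabel (D : Finset (ℕ × ℕ)) (p : ℕ × ℕ) : ℕ :=
  ((colLabelList ((D.filter (fun q => q.2 = p.2)).image Prod.fst)
      ((D.filter (fun q => p.2 < q.2)).image Prod.fst)).lookup p.1).getD 0

/-- Number of snowflakes of the modified snow diagram `snow-hat(D)`. -/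
def sfhat (D : Finset (ℕ × ℕ)) : ℕ :=
  (((Finset.range (D.sup Prod.fst + 1)) ×ˢ (D.image Prod.snd)).filter
    (fun p => 1 ≤ p.1 ∧ p ∉ D ∧
      ∃ q ∈ D, q.2 = p.2 ∧ p.1 < q.1 ∧ hatLabel D q ≤ p.1)).card

/-- Cells of `D` that are rightmost in their row. -/
def rmostCells (D : Finset (ℕ × ℕ)) : Finset (ℕ × ℕ) :=
  D.filter (fun p => ∀ q ∈ D, q.1 = p.1 → q.2 ≤ p.2)

/-- `S(D)`: cells that are not rightmost in their row and such that no cell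
above them in their column is rightmost in its row. -/
def SofD (D : Finset (ℕ × ℕ)) : Finset (ℕ × ℕ) :=
  D.filter (fun p => p ∉ rmostCells D ∧
    ∀ q ∈ D, q.2 = p.2 → p.1 < q.1 → q ∉ rmostCells D)

/-- Restriction of `D` to the columns in `C`. -/
def Res (D : Finset (ℕ × ℕ)) (C : Finset ℕ) : Finset (ℕ × ℕ) :=
  D.filter (fun p => p.2 ∈ C)

open Classical in
/-- The ghost move at row `r`, as a function (identity when no move is possible). -/
noncomputable def gmove (T : Diagram) (r : ℕ) : Diagram :=
  if h : ∃ p : ℕ × ℕ, KohnertMovable T r p.1 p.2 then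
    applyGhost T r h.choose.1 h.choose.2
  else T

/-! ### Auxiliary development for Statement 10 -/

namespace LockAux

/-- Non-ghost cells of a diagram. -/
def ng (T : Diagram) : Finset (ℕ × ℕ) := T.cells \ T.ghosts

/-- Number of non-ghost cells in column `c`. -/
def colCard (T : Diagram) (c : ℕ) : ℕ := ((ng T).filter (fun p => p.2 = c)).card

/-- Number of non-ghost cells in column `c` weakly below row `r`. -/
def belowCount (T : Diagram) (r c : ℕ) : ℕ :=
  ((ng T).filter (fun p => p.2 = c ∧ p.1 ≤ r)).card

/-- The set of labels that must occur in column `c` of any lock labeling. -/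
def Sset (α : List ℕ) (c : ℕ) : Finset ℕ :=
  (Finset.Icc 1 α.length).filter (fun j => 0 < α.getD (j-1) 0 ∧
    α.foldr max 0 - α.getD (j-1) 0 + 1 ≤ c ∧ c ≤ α.foldr max 0)

lemma uniq {S : Finset ℕ} {y y' : ℕ} (hy : y ∈ S) (hy' : y' ∈ S)
    (h : (S.filter (· ≤ y)).card = (S.filter (· ≤ y')).card) : y = y' := by
  have key : ∀ {a b : ℕ}, a ∈ S → b ∈ S → a < b →
      (S.filter (· ≤ a)).card < (S.filter (· ≤ b)).card := by
    intro a b _ hb hab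
    apply Finset.card_lt_card
    refine ⟨fun x hx => ?_, fun hsub => ?_⟩
    · simp only [Finset.mem_filter] at hx ⊢
      exact ⟨hx.1, hx.2.trans hab.le⟩
    · have := hsub (Finset.mem_filter.mpr ⟨hb, le_refl _⟩)
      simp only [Finset.mem_filter] at this
      omega
  rcases lt_trichotomy y y' with hlt | heq | hlt
  · exact absurd h (Nat.ne_of_lt (key hy hy' hlt))
  · exact heq
  · exact absurd h.symm (Nat.ne_of_lt (key hy' hy hlt))

lemma card_insert_erase {X : Finset (ℕ × ℕ)} {a b : ℕ × ℕ}
    (P : ℕ × ℕ → Prop) [DecidablePred P]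
    (ha : a ∈ X) (hb : b ∉ X) (hiff : P a ↔ P b) :
    ((insert b (X.erase a)).filter P).card = (X.filter P).card := by
  by_cases hPa : P a
  · have hPb : P b := hiff.mp hPa
    have haf : a ∈ X.filter P := Finset.mem_filter.mpr ⟨ha, hPa⟩
    have h1 : 1 ≤ (X.filter P).card := Finset.card_pos.mpr ⟨a, haf⟩
    have hbf : b ∉ (X.filter P).erase a := fun hmem =>
      hb (Finset.mem_filter.mp (Finset.mem_of_mem_erase hmem)).1
    rw [Finset.filter_insert, if_pos hPb, Finset.filter_erase,
      Finset.card_insert_of_notMem hbf, Finset.card_erase_of_mem haf]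
    omega
  · have hPb : ¬ P b := fun h => hPa (hiff.mpr h)
    rw [Finset.filter_insert, if_neg hPb, Finset.filter_erase,
      Finset.erase_eq_of_notMem (fun hmem => hPa (Finset.mem_filter.mp hmem).2)]

lemma ng_applyKohnert {T : Diagram} {r c rhat : ℕ} (hm : KohnertMovable T r c rhat)
    (hsub : T.ghosts ⊆ T.cells) :
    ng (applyKohnert T r c rhat) = insert (rhat, c) ((ng T).erase (r, c)) := by
  obtain ⟨⟨hcell, -⟩, hng, -, hlt, hfree, -⟩ := hm
  have hbg : (rhat, c) ∉ T.ghosts := fun h => hfree (hsub h)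
  ext x
  simp only [ng, applyKohnert, Finset.mem_sdiff, Finset.mem_insert, Finset.mem_erase]
  constructor
  · rintro ⟨hx | ⟨hx1, hx2⟩, hg⟩
    · exact Or.inl hx
    · exact Or.inr ⟨hx1, hx2, hg⟩
  · rintro (hx | ⟨hne, hx, hg⟩)
    · subst hx; exact ⟨Or.inl rfl, hbg⟩
    · exact ⟨Or.inr ⟨hne, hx⟩, hg⟩

lemma ng_applyGhost {T : Diagram} {r c rhat : ℕ} (hm : KohnertMovable T r c rhat)
    (hsub : T.ghosts ⊆ T.cells) :
    ng (applyGhost T r c rhat) = insert (rhat, c) ((ng T).erase (r, c)) := by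
  obtain ⟨⟨hcell, -⟩, hng, -, hlt, hfree, -⟩ := hm
  have hbg : (rhat, c) ∉ T.ghosts := fun h => hfree (hsub h)
  have hne : ((rhat : ℕ), c) ≠ (r, c) := by
    intro h
    exact absurd (congrArg Prod.fst h) (by simp; omega)
  ext x
  simp only [ng, applyGhost, Finset.mem_sdiff, Finset.mem_insert, Finset.mem_erase]
  constructor
  · rintro ⟨hx | hx, hg⟩
    · exact Or.inl hx
    · push_neg at hg
      exact Or.inr ⟨hg.1, hx, hg.2⟩
  · rintro (hx | ⟨hxne, hx, hg⟩)
    · subst hx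
      exact ⟨Or.inl rfl, by push_neg; exact ⟨hne, hbg⟩⟩
    · exact ⟨Or.inr hx, by push_neg; exact ⟨hxne, hg⟩⟩

lemma kstep_spec {T T' : Diagram} (h : KStep T T') (hsub : T.ghosts ⊆ T.cells) :
    ∃ r c rhat, KohnertMovable T r c rhat ∧
      ng T' = insert (rhat, c) ((ng T).erase (r, c)) ∧
      T.ghosts ⊆ T'.ghosts ∧ T'.ghosts ⊆ T'.cells ∧
      (∀ g ∈ T'.ghosts, g ∈ T.ghosts ∨ g = (r, c)) := by
  obtain ⟨r, c, rhat, hm, hcase⟩ := h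
  refine ⟨r, c, rhat, hm, ?_⟩
  rcases hcase with rfl | rfl
  · refine ⟨ng_applyKohnert hm hsub, Finset.Subset.refl _, ?_, fun g hg => Or.inl hg⟩
    intro g hg
    simp only [applyKohnert] at hg ⊢
    refine Finset.mem_insert_of_mem (Finset.mem_erase.mpr ⟨?_, hsub hg⟩)
    intro h; exact hm.2.1 (h ▸ hg)
  · refine ⟨ng_applyGhost hm hsub, ?_, ?_, ?_⟩
    · exact Finset.subset_insert _ _
    · intro g hg
      simp only [applyGhost] at hg ⊢
      rcases Finset.mem_insert.mp hg with rfl | hg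
      · exact Finset.mem_insert_of_mem hm.1.1
      · exact Finset.mem_insert_of_mem (hsub hg)
    · intro g hg
      simp only [applyGhost] at hg
      rcases Finset.mem_insert.mp hg with rfl | hg
      · exact Or.inr rfl
      · exact Or.inl hg

lemma kstep_counts {T T' : Diagram} (h : KStep T T') (hsub : T.ghosts ⊆ T.cells) :
    T'.ghosts ⊆ T'.cells ∧
    (∀ c, colCard T' c = colCard T c) ∧
    (∀ g ∈ T'.ghosts, g ∈ T.ghosts ∨ 1 ≤ belowCount T' g.1 g.2) ∧
    (∀ r c, (r, c) ∈ T.ghosts →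
      (r, c) ∈ T'.ghosts ∧ belowCount T' r c = belowCount T r c) := by
  obtain ⟨r0, c0, rhat0, hm, hng, hmono, hsub', hnew⟩ := kstep_spec h hsub
  have hangT : ((r0 : ℕ), c0) ∈ ng T := Finset.mem_sdiff.mpr ⟨hm.1.1, hm.2.1⟩
  have hbngT : ((rhat0 : ℕ), c0) ∉ ng T := fun hx =>
    hm.2.2.2.2.1 (Finset.mem_sdiff.mp hx).1
  have hlt : rhat0 < r0 := hm.2.2.2.1
  refine ⟨hsub', ?_, ?_, ?_⟩
  · intro c
    unfold colCard
    rw [hng]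
    exact card_insert_erase _ hangT hbngT Iff.rfl
  · intro g hg
    rcases hnew g hg with hold | rfl
    · exact Or.inl hold
    · refine Or.inr (Finset.card_pos.mpr ⟨(rhat0, c0), ?_⟩)
      rw [hng]
      exact Finset.mem_filter.mpr ⟨Finset.mem_insert_self _ _, rfl, hlt.le⟩
  · intro r c hg
    refine ⟨hmono hg, ?_⟩
    unfold belowCount
    rw [hng]
    apply card_insert_erase _ hangT hbngT
    by_cases hc : c0 = c
    · subst hc
      have h1 : r ≠ rhat0 := by
        intro h
        exact hm.2.2.2.2.1 (h ▸ hsub hg)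
      have h2 : r ≠ r0 := by
        intro h
        exact hm.2.1 (h ▸ hg)
      have h3 : ¬ (rhat0 < r ∧ r < r0) := by
        rintro ⟨ha, hb⟩
        exact (hm.2.2.2.2.2 r ha hb).2 hg
      constructor
      · rintro ⟨-, hr⟩; exact ⟨rfl, by omega⟩
      · rintro ⟨-, hr⟩; exact ⟨rfl, by omega⟩
    · constructor
      · rintro ⟨h, -⟩; exact absurd h hc
      · rintro ⟨h, -⟩; exact absurd h hc

lemma chain_inv {T T' : Diagram} (h : Relation.ReflTransGen KStep T T')
    (hsub : T.ghosts ⊆ T.cells)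
    (hpos : ∀ g ∈ T.ghosts, 1 ≤ belowCount T g.1 g.2) :
    T'.ghosts ⊆ T'.cells ∧ (∀ c, colCard T' c = colCard T c) ∧
    (∀ g ∈ T'.ghosts, 1 ≤ belowCount T' g.1 g.2) ∧
    (∀ r c, (r, c) ∈ T.ghosts →
      (r, c) ∈ T'.ghosts ∧ belowCount T' r c = belowCount T r c) := by
  induction h with
  | refl => exact ⟨hsub, fun _ => rfl, hpos, fun r c hg => ⟨hg, rfl⟩⟩
  | tail hUV hstep ih =>
    obtain ⟨ih1, ih2, ih3, ih4⟩ := ih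
    obtain ⟨s1, s2, s3, s4⟩ := kstep_counts hstep ih1
    refine ⟨s1, fun c => (s2 c).trans (ih2 c), ?_, ?_⟩
    · intro g hg
      rcases s3 g hg with hold | hnew
      · have := (s4 g.1 g.2 (by rwa [Prod.mk.eta])).2
        rw [this]
        exact ih3 g hold
      · exact hnew
    · intro r c hg
      obtain ⟨h1, h2⟩ := ih4 r c hg
      obtain ⟨h3, h4⟩ := s4 r c h1
      exact ⟨h3, h4.trans h2⟩

lemma label_rank {α : List ℕ} {cells : Finset (ℕ × ℕ)} {L : ℕ × ℕ → ℕ}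
    (hL : IsLockLabeling α cells L) {c : ℕ}
    (hcard : (cells.filter (fun q => q.2 = c)).card = (Sset α c).card)
    {p : ℕ × ℕ} (hp : p ∈ cells) (hpc : p.2 = c) :
    L p ∈ Sset α c ∧
    ((Sset α c).filter (· ≤ L p)).card
      = (cells.filter (fun q => q.2 = c ∧ q.1 ≤ p.1)).card := by
  obtain ⟨h1, h2, h3, h4, h5⟩ := hL
  set R : Finset ℕ := (cells.filter (fun q => q.2 = c)).image Prod.fst with hR
  have hmemR : ∀ ρ : ℕ, ρ ∈ R ↔ (ρ, c) ∈ cells := by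
    intro ρ
    simp only [hR, Finset.mem_image, Finset.mem_filter]
    constructor
    · rintro ⟨q, ⟨hq, hqc⟩, hq1⟩
      have hq' : q = (ρ, c) := by rw [← hq1, ← hqc]
      exact hq' ▸ hq
    · exact fun h => ⟨(ρ, c), ⟨h, rfl⟩, rfl⟩
  have hfinj : Set.InjOn Prod.fst ((cells.filter (fun q => q.2 = c)) : Set (ℕ × ℕ)) := by
    intro q hq q' hq' hqq
    simp only [Finset.coe_filter, Set.mem_setOf_eq] at hq hq'
    exact Prod.ext hqq (hq.2.trans hq'.2.symm)
  have hRcard : R.card = (cells.filter (fun q => q.2 = c)).card :=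
    Finset.card_image_of_injOn hfinj
  set f : ℕ → ℕ := fun ρ => L (ρ, c) with hf
  have hmono : ∀ a ∈ R, ∀ b ∈ R, a < b → f a < f b := by
    intro a ha b hb hab
    exact h5 (a, c) ((hmemR a).mp ha) (b, c) ((hmemR b).mp hb) rfl hab
  have hinjf : Set.InjOn f ↑R := by
    intro a ha b hb hfe
    rcases lt_trichotomy a b with hab | hab | hab
    · exact absurd hfe (Nat.ne_of_lt (hmono a (Finset.mem_coe.mp ha) b (Finset.mem_coe.mp hb) hab))
    · exact hab
    · exact absurd hfe.symm (Nat.ne_of_lt (hmono b (Finset.mem_coe.mp hb) a (Finset.mem_coe.mp ha) hab))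
  have hSsub : Sset α c ⊆ R.image f := by
    intro j hj
    simp only [Sset, Finset.mem_filter, Finset.mem_Icc] at hj
    obtain ⟨⟨hj1, hj2⟩, hj3, hj4, hj5⟩ := hj
    obtain ⟨p0, ⟨hp0, hp0c, hp0L⟩, -⟩ := h2 j hj1 hj2 hj3 c hj4 hj5
    have hpe : ((p0.1 : ℕ), c) = p0 := by rw [← hp0c]
    refine Finset.mem_image.mpr ⟨p0.1, (hmemR _).mpr (hpe ▸ hp0), ?_⟩
    show L (p0.1, c) = j
    rw [hpe]; exact hp0L
  have himg : R.image f = Sset α c := by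
    refine (Finset.eq_of_subset_of_card_le hSsub ?_).symm
    calc (R.image f).card ≤ R.card := Finset.card_image_le
    _ = (Sset α c).card := by rw [hRcard, hcard]
  have hpe2 : ((p.1 : ℕ), c) = p := by rw [← hpc]
  have hp1R : p.1 ∈ R := (hmemR _).mpr (hpe2 ▸ hp)
  have hfp : f p.1 = L p := by show L (p.1, c) = L p; rw [hpe2]
  have hmem : L p ∈ Sset α c := by
    rw [← himg, ← hfp]
    exact Finset.mem_image_of_mem f hp1R
  refine ⟨hmem, ?_⟩
  have hstep1 : (Sset α c).filter (· ≤ L p) = (R.filter (· ≤ p.1)).image f := by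
    ext y
    simp only [Finset.mem_filter, Finset.mem_image]
    constructor
    · rintro ⟨hyS, hy⟩
      rw [← himg] at hyS
      obtain ⟨x, hxR, hfx⟩ := Finset.mem_image.mp hyS
      refine ⟨x, ⟨hxR, ?_⟩, hfx⟩
      by_contra hx
      push_neg at hx
      have := hmono p.1 hp1R x hxR hx
      rw [hfp, hfx] at this
      omega
    · rintro ⟨x, ⟨hxR, hx⟩, rfl⟩
      refine ⟨himg ▸ Finset.mem_image_of_mem f hxR, ?_⟩
      rcases lt_or_eq_of_le hx with h | h
      · have := hmono x hxR p.1 hp1R h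
        rw [hfp] at this
        exact this.le
      · exact le_of_eq (by rw [h, hfp])
  have hstep2 : ((R.filter (· ≤ p.1)).image f).card = (R.filter (· ≤ p.1)).card :=
    Finset.card_image_of_injOn (hinjf.mono (Finset.coe_subset.mpr (Finset.filter_subset _ _)))
  have hstep3 : R.filter (· ≤ p.1)
      = (cells.filter (fun q => q.2 = c ∧ q.1 ≤ p.1)).image Prod.fst := by
    ext x
    simp only [Finset.mem_filter, Finset.mem_image]
    constructor
    · rintro ⟨hxR, hx⟩
      exact ⟨(x, c), ⟨(hmemR x).mp hxR, rfl, hx⟩, rfl⟩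
    · rintro ⟨q, ⟨hq, hqc, hq1⟩, rfl⟩
      refine ⟨(hmemR _).mpr ?_, hq1⟩
      rw [show ((q.1 : ℕ), c) = q from by rw [← hqc]]
      exact hq
  have hstep4 : ((cells.filter (fun q => q.2 = c ∧ q.1 ≤ p.1)).image Prod.fst).card
      = (cells.filter (fun q => q.2 = c ∧ q.1 ≤ p.1)).card := by
    apply Finset.card_image_of_injOn
    intro q hq q' hq' hqq
    simp only [Finset.coe_filter, Set.mem_setOf_eq] at hq hq'
    exact Prod.ext hqq (hq.2.1.trans hq'.2.1.symm)
  rw [hstep1, hstep2, hstep3, hstep4]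

lemma ghostLabel_rank {α : List ℕ} {T : Diagram} {L : ℕ × ℕ → ℕ}
    (hL : IsLockLabeling α (T.cells \ T.ghosts) L) {r c : ℕ}
    (hcard : colCard T c = (Sset α c).card)
    (hpos : 1 ≤ belowCount T r c) :
    ghostLabel T L r c ∈ Sset α c ∧
    ((Sset α c).filter (· ≤ ghostLabel T L r c)).card = belowCount T r c := by
  unfold belowCount ng at hpos ⊢
  unfold colCard ng at hcard
  set F := ((T.cells \ T.ghosts).filter (fun p => p.2 = c ∧ p.1 ≤ r)) with hF
  have hne : F.Nonempty := Finset.card_pos.mp hpos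
  obtain ⟨q, hqF, hq⟩ := Finset.exists_mem_eq_sup F hne Prod.fst
  have hqmem := Finset.mem_filter.mp hqF
  have hqe : q = (F.sup Prod.fst, c) := by
    rw [hq, ← hqmem.2.1]
  have hcell : ((F.sup Prod.fst : ℕ), c) ∈ T.cells \ T.ghosts := hqe ▸ hqmem.1
  have hler : F.sup Prod.fst ≤ r := by rw [hq]; exact hqmem.2.2
  have hglr : ghostLabel T L r c = L (F.sup Prod.fst, c) := rfl
  obtain ⟨m1, m2⟩ := label_rank hL hcard hcell rfl
  have hset : (T.cells \ T.ghosts).filter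
      (fun q => q.2 = c ∧ q.1 ≤ ((F.sup Prod.fst : ℕ), c).1) = F := by
    ext x
    rw [hF]
    simp only [Finset.mem_filter]
    constructor
    · rintro ⟨hm, hc2, hl⟩
      exact ⟨hm, hc2, le_trans hl hler⟩
    · rintro ⟨hm, hc2, hl⟩
      refine ⟨hm, hc2, ?_⟩
      exact Finset.le_sup (f := Prod.fst) (Finset.mem_filter.mpr ⟨hm, hc2, hl⟩)
  rw [hglr]
  refine ⟨m1, ?_⟩
  rw [m2, hset]

lemma getD_le_foldr (α : List ℕ) : ∀ i, α.getD i 0 ≤ α.foldr max 0 := by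
  induction α with
  | nil => intro i; simp
  | cons a l ih =>
    intro i
    cases i with
    | zero => exact le_max_left _ _
    | succ n => exact le_trans (ih n) (le_max_right _ _)

lemma lock_col (α : List ℕ) (c : ℕ) :
    (lockDiagram α).filter (fun p => p.2 = c) = (Sset α c).image (fun j => (j, c)) := by
  ext p
  simp only [lockDiagram, Sset, Finset.mem_filter, Finset.mem_biUnion, Finset.mem_image,
    Finset.mem_range, Finset.mem_Icc]
  constructor
  · rintro ⟨⟨i, hi, jj, hjj, rfl⟩, hc⟩
    have hle := getD_le_foldr α i
    simp only at hc
    refine ⟨i + 1, ⟨⟨by omega, by omega⟩, ?_, ?_, ?_⟩, ?_⟩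
    · simp only [Nat.add_sub_cancel]
      omega
    · simp only [Nat.add_sub_cancel]
      omega
    · omega
    · simp only [Prod.mk.injEq, true_and]
      omega
  · rintro ⟨j, ⟨⟨hj1, hj2⟩, hj3, hj4, hj5⟩, rfl⟩
    have hle := getD_le_foldr α (j - 1)
    refine ⟨⟨j - 1, by omega, α.foldr max 0 - c, by omega, ?_⟩, rfl⟩
    simp only [Prod.mk.injEq]
    omega

lemma lock_colCard (α : List ℕ) (c : ℕ) :
    colCard ⟨lockDiagram α, ∅⟩ c = (Sset α c).card := by
  unfold colCard ng
  simp only [Finset.sdiff_empty]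
  rw [lock_col]
  exact Finset.card_image_of_injective _ (fun a b h => by simpa using h)

end LockAux

/-- For a lock diagram D and T ∈ KKD(D): ghost cells, together
with their labels, persist under further K-Kohnert moves; and a ghost move at
row r leaves a ghost cell whose label is that of the cell it replaces. -/
theorem lock_ghost_label_persistence (α : List ℕ) (T : Diagram)
    (hT : T ∈ KKD ⟨lockDiagram α, ∅⟩) (L : ℕ × ℕ → ℕ)
    (hL : IsLockLabeling α (T.cells \ T.ghosts) L) :
    (∀ T' : Diagram, Relation.ReflTransGen KStep T T' →
      ∀ L' : ℕ × ℕ → ℕ, IsLockLabeling α (T'.cells \ T'.ghosts) L' →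
      ∀ r c, (r, c) ∈ T.ghosts →
        (r, c) ∈ T'.ghosts ∧ ghostLabel T' L' r c = ghostLabel T L r c) ∧
    (∀ r c rhat, KohnertMovable T r c rhat →
      ∀ L'' : ℕ × ℕ → ℕ,
        IsLockLabeling α ((applyGhost T r c rhat).cells \ (applyGhost T r c rhat).ghosts) L'' →
        ghostLabel (applyGhost T r c rhat) L'' r c = L (r, c)) := by
  classical
  have hsub0 : (⟨lockDiagram α, ∅⟩ : Diagram).ghosts ⊆ (⟨lockDiagram α, ∅⟩ : Diagram).cells := by
    intro g hg
    exact absurd hg (Finset.notMem_empty g)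
  obtain ⟨hTsub, hTcol, hTpos, -⟩ := LockAux.chain_inv hT hsub0
    (fun g hg => absurd hg (Finset.notMem_empty g))
  have hTcard : ∀ c, LockAux.colCard T c = (LockAux.Sset α c).card :=
    fun c => (hTcol c).trans (LockAux.lock_colCard α c)
  constructor
  · intro T' hTT' L' hL' r c hg
    obtain ⟨hT'sub, hT'col, hT'pos, hT'gh⟩ := LockAux.chain_inv hTT' hTsub hTpos
    obtain ⟨hg', hbc⟩ := hT'gh r c hg
    refine ⟨hg', ?_⟩
    have hpT : 1 ≤ LockAux.belowCount T r c := hTpos (r, c) hg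
    have hpT' : 1 ≤ LockAux.belowCount T' r c := by rw [hbc]; exact hpT
    obtain ⟨m1, m2⟩ := LockAux.ghostLabel_rank hL (hTcard c) hpT
    obtain ⟨m1', m2'⟩ := LockAux.ghostLabel_rank hL' ((hT'col c).trans (hTcard c)) hpT'
    exact LockAux.uniq m1' m1 (by rw [m2, m2', hbc])
  · intro r c rhat hm L'' hL''
    have hng := LockAux.ng_applyGhost hm hTsub
    have hcellng : (r, c) ∈ T.cells \ T.ghosts := Finset.mem_sdiff.mpr ⟨hm.1.1, hm.2.1⟩
    have hbngT : ((rhat : ℕ), c) ∉ T.cells \ T.ghosts := fun hx =>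
      hm.2.2.2.2.1 (Finset.mem_sdiff.mp hx).1
    obtain ⟨a1, a2⟩ := LockAux.label_rank hL (hTcard c) hcellng rfl
    have hlt : rhat < r := hm.2.2.2.1
    have hb2 : LockAux.belowCount (applyGhost T r c rhat) r c = LockAux.belowCount T r c := by
      have h := LockAux.card_insert_erase (X := LockAux.ng T) (a := (r, c)) (b := (rhat, c))
        (fun p => p.2 = c ∧ p.1 ≤ r) hcellng hbngT
        ⟨fun _ => ⟨rfl, hlt.le⟩, fun _ => ⟨rfl, le_refl r⟩⟩
      unfold LockAux.belowCount
      rw [hng, h]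
    have hcol2 : LockAux.colCard (applyGhost T r c rhat) c = (LockAux.Sset α c).card := by
      have h := LockAux.card_insert_erase (X := LockAux.ng T) (a := (r, c)) (b := (rhat, c))
        (fun p => p.2 = c) hcellng hbngT ⟨fun _ => rfl, fun _ => rfl⟩
      unfold LockAux.colCard
      rw [hng, h]
      exact hTcard c
    have hpos2 : 1 ≤ LockAux.belowCount (applyGhost T r c rhat) r c := by
      apply Finset.card_pos.mpr
      refine ⟨(rhat, c), ?_⟩
      show (rhat, c) ∈ (LockAux.ng (applyGhost T r c rhat)).filter _
      rw [hng]
      exact Finset.mem_filter.mpr ⟨Finset.mem_insert_self _ _, rfl, hlt.le⟩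
    obtain ⟨b1, b2⟩ := LockAux.ghostLabel_rank hL'' hcol2 hpos2
    have ha2' : ((LockAux.Sset α c).filter (· ≤ L (r, c))).card = LockAux.belowCount T r c := a2
    exact LockAux.uniq b1 a1 (by rw [b2, ha2', hb2])
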